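/- arXiv:1505.05206 — 6 statements merged into one kernel-verified Lean document; each statement's English description precedes it below -/
import Mathlib

section
/- For all integers b, c and every natural number a, ∑_{k ∈ ℤ} (−1)^k · C(b + k, c + k) · C(a, k) = (−1)^a · C(b, a + c). -/
/-- The generalized binomial coefficient `C(x, k)` for integers `x, k`:
`x(x-1)⋯(x-k+1)/k!` when `k ≥ 0` and `0` when `k < 0`. -/
noncomputable def zchoose (x k : ℤ) : ℤ := if 0 ≤ k then Ring.choose x k.toNat else 0

/-!
With `g x = C(b + x, c + x)`, Pascal's rule says that the forward difference of `g` is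
`x ↦ C(b + x, c + 1 + x)`, so the `a`-th forward difference of `g` at `0` is `C(b, c + a)`.
Expanding that iterated difference by Newton's formula `Δ^a g 0 = ∑ (-1)^(a-k) C(a, k) g k` gives
the identity; `C(a, k)` vanishes outside `0 ≤ k ≤ a`, which makes the sum over `ℤ` finite.
-/

open Finset Function fwdDiff

lemma zchoose_natCast (a k : ℕ) : zchoose a k = a.choose k := by
  simp [zchoose, Ring.choose_natCast]

lemma zchoose_of_neg {x k : ℤ} (hk : k < 0) : zchoose x k = 0 := by
  simp [zchoose, not_le.mpr hk]

lemma zchoose_natCast_of_lt {a : ℕ} {k : ℤ} (h : (a : ℤ) < k) : zchoose a k = 0 := by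
  lift k to ℕ using by omega
  rw [zchoose_natCast, Nat.choose_eq_zero_of_lt (by omega), Nat.cast_zero]

lemma zchoose_add_one_add_one (x k : ℤ) :
    zchoose (x + 1) (k + 1) = zchoose x k + zchoose x (k + 1) := by
  rcases lt_trichotomy k (-1) with hk | rfl | hk
  · rw [zchoose_of_neg (by omega), zchoose_of_neg (by omega), zchoose_of_neg (by omega), add_zero]
  · simp [zchoose]
  · lift k to ℕ using by omega
    have hk1 : ((k : ℤ) + 1).toNat = k + 1 := by omega
    simp only [zchoose, if_pos (by omega : (0 : ℤ) ≤ k + 1), if_pos (Int.natCast_nonneg k),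
      Int.toNat_natCast, hk1, Ring.choose_succ_succ]

lemma fwdDiff_zchoose_diag (b c : ℤ) :
    Δ_[1] (fun x ↦ zchoose (b + x) (c + x)) = fun x ↦ zchoose (b + x) (c + 1 + x) := by
  ext x
  rw [fwdDiff, ← add_assoc, ← add_assoc, zchoose_add_one_add_one, add_right_comm c,
    add_sub_cancel_left]

lemma fwdDiff_iter_zchoose_diag (b c : ℤ) (n : ℕ) :
    (Δ_[1])^[n] (fun x ↦ zchoose (b + x) (c + x)) = fun x ↦ zchoose (b + x) (c + n + x) := by
  induction n generalizing c with
  | zero => simp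
  | succ n ih =>
    rw [iterate_succ_apply, fwdDiff_zchoose_diag, ih]
    funext x
    congr 2
    push_cast
    ring

theorem sum_range_neg_one_pow_mul_zchoose_diag (b c : ℤ) (a : ℕ) :
    ∑ k ∈ range (a + 1), (-1 : ℤ) ^ k * zchoose (b + k) (c + k) * a.choose k
      = (-1) ^ a * zchoose b (a + c) := by
  have h := fwdDiff_iter_eq_sum_shift 1 (fun x ↦ zchoose (b + x) (c + x)) a 0
  rw [fwdDiff_iter_zchoose_diag] at h
  simp only [add_zero, zero_add, nsmul_eq_mul, mul_one, smul_eq_mul] at h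
  rw [add_comm (a : ℤ) c, h, mul_sum]
  refine sum_congr rfl fun k _ ↦ ?_
  have hsign : (-1 : ℤ) ^ a * (-1) ^ (a - k) = (-1) ^ k := by
    rw [← pow_add, show a + (a - k) = k + 2 * (a - k) by grind, pow_add, pow_mul]
    norm_num
  rw [← hsign]
  ring

lemma finsum_mul_zchoose_natCast (f : ℤ → ℤ) (a : ℕ) :
    ∑ᶠ k : ℤ, f k * zchoose a k = ∑ k ∈ range (a + 1), f k * a.choose k := by
  have hsupp : support (fun k ↦ f k * zchoose a k) ⊆
      ((range (a + 1)).map (Nat.castEmbedding (R := ℤ)) : Set ℤ) := by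
    intro k hk
    have hz : zchoose a k ≠ 0 := right_ne_zero_of_mul hk
    have h0 : 0 ≤ k := not_lt.1 fun h ↦ hz (zchoose_of_neg h)
    have ha : k ≤ a := not_lt.1 fun h ↦ hz (zchoose_natCast_of_lt h)
    lift k to ℕ using h0
    exact mem_coe.2 (mem_map_of_mem _ (mem_range.2 (by omega)))
  rw [finsum_eq_sum_of_support_subset _ hsupp, sum_map]
  simp [zchoose_natCast]

/-- For integers `b, c` and a natural number `a`,
`∑_{k ∈ ℤ} (−1)^k · C(b + k, c + k) · C(a, k) = (−1)^a · C(b, a + c)`. -/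
theorem alternating_vandermonde_int (b c : ℤ) (a : ℕ) :
    ∑ᶠ k : ℤ, (k.negOnePow : ℤ) * zchoose (b + k) (c + k) * zchoose (a : ℤ) k
      = (-1 : ℤ) ^ a * zchoose b ((a : ℤ) + c) := by
  rw [finsum_mul_zchoose_natCast]
  simp only [Int.coe_negOnePow_natCast]
  exact sum_range_neg_one_pow_mul_zchoose_diag b c a
end

section
/- Let F, G, J be integers with 2 ≤ J, 2 ≤ G, and G + J ≤ F + 1. Then C(F−1, G−1) · C(F−G+1, J−1) = C(F−J, G−2) · C(F−1, J−2) + C(F−J, G−1) · C(F, J−1). -/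
lemma zchoose_natCast_s5 (n k : ℕ) : zchoose n k = n.choose k := by
  simp [zchoose, Ring.choose_natCast]

namespace Nat

theorem choose_mul_choose_sub_comm (n i j : ℕ) :
    n.choose i * (n - i).choose j = n.choose j * (n - j).choose i := by
  have hi := choose_mul (n := n) (k := i + j) (s := i) (by omega)
  have hj := choose_mul (n := n) (k := i + j) (s := j) (by omega)
  rw [Nat.add_sub_cancel_left] at hi
  rw [Nat.add_sub_cancel] at hj
  rw [← hi, ← hj, choose_symm_add]

theorem choose_succ_mul_choose_sub_succ {n a b : ℕ} (h : a + b < n) :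
    n.choose (a + 1) * (n - a).choose (b + 1)
      = (n - (b + 1)).choose a * n.choose b
        + (n - (b + 1)).choose (a + 1) * (n + 1).choose (b + 1) := by
  have hna : n - a = n - (a + 1) + 1 := by omega
  have hnb : n - b = n - (b + 1) + 1 := by omega
  calc n.choose (a + 1) * (n - a).choose (b + 1)
      = n.choose (a + 1) * (n - (a + 1)).choose b
          + n.choose (a + 1) * (n - (a + 1)).choose (b + 1) := by
        rw [hna, choose_succ_succ', Nat.mul_add]
    _ = n.choose b * (n - b).choose (a + 1)
          + n.choose (b + 1) * (n - (b + 1)).choose (a + 1) := by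
        rw [choose_mul_choose_sub_comm n (a + 1) b, choose_mul_choose_sub_comm n (a + 1) (b + 1)]
    _ = (n - (b + 1)).choose a * n.choose b
          + (n - (b + 1)).choose (a + 1) * (n + 1).choose (b + 1) := by
        rw [hnb, choose_succ_succ', choose_succ_succ' n b]
        ring

end Nat

/-- For integers `F, G, J` with `2 ≤ J`, `2 ≤ G`, and `G + J ≤ F + 1`,
`C(F−1, G−1) · C(F−G+1, J−1) = C(F−J, G−2) · C(F−1, J−2) + C(F−J, G−1) · C(F, J−1)`. -/
theorem binomial_identity_STS (F G J : ℤ) (hJ : 2 ≤ J) (hG : 2 ≤ G) (hF : G + J ≤ F + 1) :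
    zchoose (F - 1) (G - 1) * zchoose (F - G + 1) (J - 1)
      = zchoose (F - J) (G - 2) * zchoose (F - 1) (J - 2)
        + zchoose (F - J) (G - 1) * zchoose F (J - 1) := by
  obtain ⟨a, rfl⟩ : ∃ a : ℕ, G = a + 2 := ⟨(G - 2).toNat, by omega⟩
  obtain ⟨b, rfl⟩ : ∃ b : ℕ, J = b + 2 := ⟨(J - 2).toNat, by omega⟩
  obtain ⟨n, rfl⟩ : ∃ n : ℕ, F = n + 1 := ⟨(F - 1).toNat, by omega⟩
  have key := congrArg (Nat.cast : ℕ → ℤ)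
    (Nat.choose_succ_mul_choose_sub_succ (by omega : a + b < n))
  simp only [Nat.cast_add, Nat.cast_mul, ← zchoose_natCast_s5] at key
  convert key using 4 <;> omega
end

section
/- Let g ≥ 1 and m ≥ 0 be natural numbers. Then ∑_{j=0}^{⌊m/2⌋} C(g, m−2j) · C(g+j−1, j) = C(g+m−1, m). -/
/-!
In `ℤ⟦X⟧` we have `(1 + X)^g · (1 - X²)^{-g} = (1 - X)^{-g}`, because `(1 + X)(1 - X) = 1 - X²`.
The series `(1 - X)^{-g}` has coefficients `multichoose g n = C(g + n - 1, n)`, and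
`(1 - X²)^{-g}` is its image under the substitution `X ↦ X²` (`PowerSeries.expand 2`), so
comparing coefficients of `X^m` gives the identity.
-/

open PowerSeries Finset

namespace PowerSeries

theorem coeff_one_add_X_pow {R : Type*} [Semiring R] (d k : ℕ) :
    coeff k ((1 + X : R⟦X⟧) ^ d) = d.choose k := by
  rw [← Polynomial.coe_X, ← Polynomial.coe_one, ← Polynomial.coe_add, ← Polynomial.coe_pow,
    Polynomial.coeff_coe, Polynomial.coeff_one_add_X_pow]

variable {R : Type*} [CommRing R]

theorem coeff_invOneSubPow_val (d n : ℕ) :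
    coeff n (invOneSubPow R d).val = d.multichoose n := by
  cases d with
  | zero => cases n <;> simp [invOneSubPow_zero, coeff_one]
  | succ d =>
    rw [invOneSubPow_val_succ_eq_mk_add_choose, coeff_mk, Nat.multichoose_eq,
      Nat.add_right_comm, Nat.add_sub_cancel, Nat.choose_symm_add]

theorem coeff_mul_expand (p : ℕ) (hp : p ≠ 0) (φ ψ : R⟦X⟧) (n : ℕ) :
    coeff n (φ * expand p hp ψ) = ∑ k ∈ range (n / p + 1), coeff (n - p * k) φ * coeff k ψ := by
  have hinj : Set.InjOn (p * ·) (range (n / p + 1) : Set ℕ) := fun a _ b _ h =>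
    Nat.eq_of_mul_eq_mul_left (Nat.pos_of_ne_zero hp) h
  have hsub : (range (n / p + 1)).image (p * ·) ⊆ range (n + 1) := by
    intro j hj
    obtain ⟨k, hk, rfl⟩ := mem_image.mp hj
    rw [mem_range, Nat.lt_succ_iff] at hk ⊢
    exact (Nat.mul_le_mul_left p hk).trans (Nat.mul_div_le n p)
  have hzero : ∀ j ∈ range (n + 1), j ∉ (range (n / p + 1)).image (p * ·) →
      coeff j (expand p hp ψ) * coeff (n - j) φ = 0 := by
    intro j hj hnot
    rw [coeff_expand_of_not_dvd p hp ψ, zero_mul]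
    rintro ⟨k, rfl⟩
    refine hnot (mem_image.mpr ⟨k, ?_, rfl⟩)
    rw [mem_range, Nat.lt_succ_iff] at hj ⊢
    exact Nat.le_div_iff_mul_le (Nat.pos_of_ne_zero hp) |>.mpr (by rwa [mul_comm])
  rw [mul_comm, coeff_mul, Nat.sum_antidiagonal_eq_sum_range_succ
    (fun i j => coeff i (expand p hp ψ) * coeff j φ), ← sum_subset hsub hzero, sum_image hinj]
  exact sum_congr rfl fun k _ => by rw [coeff_expand_mul, mul_comm]

theorem one_add_X_pow_mul_expand_invOneSubPow (d : ℕ) :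
    (1 + X : R⟦X⟧) ^ d * expand 2 two_ne_zero (invOneSubPow R d).val = (invOneSubPow R d).val := by
  set U := invOneSubPow R d
  have hU : U.val * (1 - X) ^ d = 1 := by
    rw [← invOneSubPow_inv_eq_one_sub_pow]
    exact U.val_inv
  have hexpand : expand 2 two_ne_zero U.val * (1 - X ^ 2) ^ d = 1 := by
    simpa [expand_X] using congrArg (expand 2 two_ne_zero) hU
  calc (1 + X : R⟦X⟧) ^ d * expand 2 two_ne_zero U.val
      = (1 + X) ^ d * expand 2 two_ne_zero U.val * (U.val * (1 - X) ^ d) := by rw [hU, mul_one]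
    _ = expand 2 two_ne_zero U.val * ((1 + X) * (1 - X)) ^ d * U.val := by rw [mul_pow]; ring
    _ = U.val := by rw [show (1 + X : R⟦X⟧) * (1 - X) = 1 - X ^ 2 by ring, hexpand, one_mul]

end PowerSeries

theorem choose_convolution_general (g m : ℕ) :
    ∑ j ∈ Finset.range (m / 2 + 1), g.choose (m - 2 * j) * (g + j - 1).choose j
      = (g + m - 1).choose m := by
  have h := congrArg (coeff m) (one_add_X_pow_mul_expand_invOneSubPow (R := ℤ) g)
  simp only [coeff_mul_expand, coeff_one_add_X_pow, coeff_invOneSubPow_val,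
    Nat.multichoose_eq] at h
  exact_mod_cast h

/-- For naturals `g ≥ 1` and `m ≥ 0`,
`∑_{j=0}^{⌊m/2⌋} C(g, m−2j) · C(g+j−1, j) = C(g+m−1, m)`. -/
theorem choose_convolution (g m : ℕ) (hg : 1 ≤ g) :
    ∑ j ∈ Finset.range (m / 2 + 1), g.choose (m - 2 * j) * (g + j - 1).choose j
      = (g + m - 1).choose m :=
  choose_convolution_general g m
end

section
/- Let g, f be natural numbers with 1 ≤ g < f and set δ = f − g. Then ∑_{ℓ=0}^{g−2} C(ℓ+f−g−1, ℓ) + ∑_{ℓ=0}^{f−g−2} (−1)^{ℓ+δ} · C(g+ℓ−1, ℓ) = ∑_{i=0}^{⌊δ/2⌋} C(f−2−2i, δ−2i), as integers. -/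
/-!
With `g = n + 1`, the first sum is `C(n + δ - 1, δ)` by the hockey-stick identity, and by Pascal's
rule this is exactly what is missing from the second sum to make it the full alternating sum
`∑_{ℓ ≤ δ} (-1)^(δ-ℓ) C(n + ℓ, ℓ)`. That alternating sum is the coefficient of `x^δ` in
`1 / ((1 + x)(1 - x)^(n+1)) = 1 / ((1 - x²)(1 - x)^n)`, i.e. `∑_i C(n - 1 + δ - 2i, δ - 2i)`;
concretely, both sides grow by `C(n + δ + 1, δ + 2)` when `δ` increases by two.
-/

open Finset

lemma sum_range_add_choose_self (n d : ℕ) :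
    ∑ ℓ ∈ range n, (ℓ + d).choose ℓ = (n + d).choose (d + 1) := by
  rcases n with _ | n
  · simp
  · simp_rw [Nat.choose_symm_add]
    rw [Nat.sum_range_add_choose, add_right_comm]

lemma alternating_sum_range_add_two_choose (n m : ℕ) :
    ∑ ℓ ∈ range (m + 2), (-1 : ℤ) ^ (ℓ + (m + 1)) * ((n + ℓ).choose ℓ : ℤ)
      = ∑ ℓ ∈ range m, (-1 : ℤ) ^ (ℓ + (m + 1)) * ((n + ℓ).choose ℓ : ℤ)
        + ((n + m).choose (m + 1) : ℤ) := by
  have pascal : ((n + (m + 1)).choose (m + 1) : ℤ)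
      = (n + m).choose m + (n + m).choose (m + 1) := by
    rw [← add_assoc]; exact_mod_cast Nat.choose_succ_succ' (n + m) m
  have sign_odd : (-1 : ℤ) ^ (m + (m + 1)) = -1 := Odd.neg_one_pow ⟨m, by ring⟩
  have sign_even : (-1 : ℤ) ^ (m + 1 + (m + 1)) = 1 := Even.neg_one_pow ⟨m + 1, rfl⟩
  rw [sum_range_succ, sum_range_succ, sign_odd, sign_even, pascal]
  ring

/-- For `n = 0` the truncated subtraction gives `C(m - 1 - 2i, m - 2i)`, which is `1` exactly
when `m = 2i`, as `C(-1, 0) = 1` should be. -/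
def parityChooseSum (n m : ℕ) : ℤ :=
  ∑ i ∈ range (m / 2 + 1), ((n + m - 1 - 2 * i).choose (m - 2 * i) : ℤ)

lemma parityChooseSum_add_two (n m : ℕ) :
    parityChooseSum n (m + 2) = ((n + m + 1).choose (m + 2) : ℤ) + parityChooseSum n m := by
  rw [parityChooseSum, show (m + 2) / 2 + 1 = m / 2 + 1 + 1 by omega, sum_range_succ',
    parityChooseSum, add_comm]
  congr 1
  refine sum_congr rfl fun i _ => ?_
  congr 2 <;> omega

lemma alternating_sum_range_choose (n m : ℕ) :
    ∑ ℓ ∈ range (m + 1), (-1 : ℤ) ^ (ℓ + m) * ((n + ℓ).choose ℓ : ℤ) = parityChooseSum n m := by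
  induction m using Nat.twoStepInduction with
  | zero => simp [parityChooseSum]
  | one => simp [parityChooseSum, sum_range_succ]
  | more m ih _ =>
    have sign : ∀ ℓ, (-1 : ℤ) ^ (ℓ + (m + 2)) = (-1) ^ (ℓ + m) := fun ℓ => by
      rw [← add_assoc, pow_add, neg_one_sq, mul_one]
    rw [alternating_sum_range_add_two_choose n (m + 1)]
    simp only [show m + 1 + 1 = m + 2 by rfl, sign, ih, parityChooseSum_add_two]
    rw [show n + (m + 1) = n + m + 1 by ring]
    ring

/-- For naturals `1 ≤ g < f` with `δ = f − g`,
`∑_{ℓ=0}^{g−2} C(ℓ+f−g−1, ℓ) + ∑_{ℓ=0}^{f−g−2} (−1)^{ℓ+δ} · C(g+ℓ−1, ℓ)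
  = ∑_{i=0}^{⌊δ/2⌋} C(f−2−2i, δ−2i)` as integers. -/
theorem multiplicity_formula (g f : ℕ) (h1 : 1 ≤ g) (h2 : g < f) (δ : ℕ) (hδ : δ = f - g) :
    (∑ ℓ ∈ Finset.range (g - 1), ((ℓ + f - g - 1).choose ℓ : ℤ))
      + ∑ ℓ ∈ Finset.range (f - g - 1), (-1 : ℤ) ^ (ℓ + δ) * ((g + ℓ - 1).choose ℓ : ℤ)
      = ∑ i ∈ Finset.range (δ / 2 + 1), ((f - 2 - 2 * i).choose (δ - 2 * i) : ℤ) := by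
  obtain ⟨n, rfl⟩ : ∃ n, g = n + 1 := ⟨g - 1, by omega⟩
  obtain ⟨d, rfl⟩ : ∃ d, f = n + d + 2 := ⟨f - n - 2, by omega⟩
  obtain rfl : δ = d + 1 := by omega
  have first : ∑ ℓ ∈ range (n + 1 - 1), ((ℓ + (n + d + 2) - (n + 1) - 1).choose ℓ : ℤ)
      = ((n + d).choose (d + 1) : ℤ) := by
    rw [← sum_range_add_choose_self, Nat.cast_sum, Nat.add_sub_cancel]
    refine sum_congr rfl fun ℓ _ => ?_
    congr 2; omega
  have second : ∑ ℓ ∈ range (n + d + 2 - (n + 1) - 1),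
        (-1 : ℤ) ^ (ℓ + (d + 1)) * ((n + 1 + ℓ - 1).choose ℓ : ℤ)
      = ∑ ℓ ∈ range d, (-1 : ℤ) ^ (ℓ + (d + 1)) * ((n + ℓ).choose ℓ : ℤ) := by
    rw [show n + d + 2 - (n + 1) - 1 = d by omega]
    refine sum_congr rfl fun ℓ _ => ?_
    rw [show n + 1 + ℓ - 1 = n + ℓ by omega]
  rw [first, second, add_comm, ← alternating_sum_range_add_two_choose,
    alternating_sum_range_choose n (d + 1), parityChooseSum,
    show n + (d + 1) - 1 = n + d by omega, Nat.add_sub_cancel]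
end

section
/- Let g, f be integers with 1 ≤ g < f and set δ = f − g. In the ring ℤ[s, s⁻¹] of Laurent polynomials, the following identity holds: 1 + ∑_{i,j ≥ 0, i+j ≤ δ−1} (−1)^{i+δ} · C(f,i) · C(g+j−1, j) · s^{i+2j+2g−f} = (1−s)^{f−g} · ( ∑_{ℓ=0}^{g−2} C(ℓ+f−g−1, ℓ) · s^ℓ + ∑_{ℓ=0}^{f−g−2} (−1)^{ℓ+δ} · C(g+ℓ−1, ℓ) · s^{ℓ+2g−f} ). -/
/-!
Put `f = g + d` and regard both sides as functions of `(g, d)`. Each satisfies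
`X (g + 1) (d + 2) = (1 - s) X (g + 1) (d + 1) + s X g (d + 2)`: on the left this is Pascal's rule
applied once to `C(g + d, i)` and once to `C(g + j - 1, j)`, on the right it is Pascal's rule for
the binomial coefficient of each of the two single sums. Induction on `g` and then on `d` leaves
the cases `d = 1`, the geometric sum `(1 - s) ∑_{ℓ < g} s^ℓ = 1 - s^g`, and `g = 0`, the binomial
expansion of `(s - 1)^d`.
-/

open LaurentPolynomial Finset

section TriangleSum

variable {M : Type*}

def triangleSum [AddCommMonoid M] (d : ℕ) (φ : ℕ → ℕ → M) : M :=
  ∑ i ∈ range d, ∑ j ∈ range (d - i), φ i j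

theorem triangleSum_comm [AddCommMonoid M] (d : ℕ) (φ : ℕ → ℕ → M) :
    triangleSum d φ = triangleSum d (fun i j => φ j i) :=
  sum_comm' fun i j => by simp only [mem_range]; omega

theorem mul_triangleSum [NonUnitalNonAssocSemiring M] (c : M) (d : ℕ) (φ : ℕ → ℕ → M) :
    c * triangleSum d φ = triangleSum d (fun i j => c * φ i j) := by
  simp only [triangleSum, mul_sum]

theorem sum_range_succ_eq_of_pascal [AddCommMonoid M] {φ ψ χ : ℕ → M} (h₀ : φ 0 = χ 0)
    (h : ∀ i, φ (i + 1) = ψ i + χ (i + 1)) (n : ℕ) :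
    ∑ i ∈ range (n + 1), φ i = ∑ i ∈ range n, ψ i + ∑ i ∈ range (n + 1), χ i := by
  simp only [sum_range_succ' φ, sum_range_succ' χ, h₀, h, sum_add_distrib, add_assoc]

theorem triangleSum_succ_eq_of_pascal_fst [AddCommMonoid M] {φ ψ χ : ℕ → ℕ → M}
    (h₀ : ∀ j, φ 0 j = χ 0 j) (h : ∀ i j, φ (i + 1) j = ψ i j + χ (i + 1) j) (d : ℕ) :
    triangleSum (d + 1) φ = triangleSum d ψ + triangleSum (d + 1) χ :=
  sum_range_succ_eq_of_pascal (by simp only [h₀])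
    (fun i => by simp only [Nat.add_sub_add_right, h, sum_add_distrib]) d

theorem triangleSum_succ_eq_of_pascal_snd [AddCommMonoid M] {φ ψ χ : ℕ → ℕ → M}
    (h₀ : ∀ i, φ i 0 = χ i 0) (h : ∀ i j, φ i (j + 1) = ψ i j + χ i (j + 1)) (d : ℕ) :
    triangleSum (d + 1) φ = triangleSum d ψ + triangleSum (d + 1) χ := by
  simp only [triangleSum_comm _ φ, triangleSum_comm _ ψ, triangleSum_comm _ χ]
  exact triangleSum_succ_eq_of_pascal_fst (φ := fun i j => φ j i) (ψ := fun i j => ψ j i)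
    (χ := fun i j => χ j i) h₀ (fun i j => h j i) d

end TriangleSum

namespace LaurentPolynomial

variable {R : Type*} [Semiring R]

theorem T_mul_C_mul_T (n m : ℤ) (a : R) : T n * (C a * T m) = C a * T (m + n) := by
  rw [T_mul, mul_assoc, ← T_add]

theorem C_mul_T_eq_add {a b c : R} {m n k : ℤ} (habc : a = b + c) (hn : n = m) (hk : k = m) :
    C a * T m = C b * T n + C c * T k := by
  rw [habc, hn, hk, map_add, add_mul]

end LaurentPolynomial

namespace HilbertNumerator

noncomputable def term (g d i j : ℕ) : LaurentPolynomial ℤ :=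
  C ((-1 : ℤ) ^ (i + d) * (g + d).choose i * (g + j - 1).choose j) * T ((i : ℤ) + 2 * j + g - d)

noncomputable def doubleSum (g d : ℕ) : LaurentPolynomial ℤ := triangleSum d (term g d)

noncomputable def firstSum (g d : ℕ) : LaurentPolynomial ℤ :=
  ∑ ℓ ∈ range (g - 1), C (((ℓ + d - 1).choose ℓ : ℤ)) * T (ℓ : ℤ)

noncomputable def secondSum (g d : ℕ) : LaurentPolynomial ℤ :=
  ∑ ℓ ∈ range (d - 1), C ((-1 : ℤ) ^ (ℓ + d) * (g + ℓ - 1).choose ℓ) * T ((ℓ : ℤ) + g - d)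

theorem doubleSum_succ_succ (g d : ℕ) :
    doubleSum (g + 1) (d + 1) = (1 - T 1) * doubleSum (g + 1) d + T 1 * doubleSum g (d + 1) := by
  set χ : ℕ → ℕ → LaurentPolynomial ℤ := fun i j =>
    C ((-1 : ℤ) ^ (i + d + 1) * (g + 1 + d).choose i * (g + j).choose j) *
      T ((i : ℤ) + 2 * j + g - d)
  have hfst : doubleSum (g + 1) (d + 1) = doubleSum (g + 1) d + triangleSum (d + 1) χ := by
    refine triangleSum_succ_eq_of_pascal_fst (fun j => ?_) (fun i j => ?_) d
    · simp only [term, χ, Nat.choose_zero_right, show g + 1 + j - 1 = g + j by omega]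
      congr 2; push_cast; ring
    · simp only [term, χ]
      refine C_mul_T_eq_add ?_ (by push_cast; ring) (by push_cast; ring)
      rw [show g + 1 + (d + 1) = g + 1 + d + 1 by omega, Nat.choose_succ_succ',
        show g + 1 + j - 1 = g + j by omega]
      push_cast; ring
  have hsnd : triangleSum (d + 1) χ = -T 1 * doubleSum (g + 1) d + T 1 * doubleSum g (d + 1) := by
    rw [doubleSum, doubleSum, mul_triangleSum, mul_triangleSum]
    refine triangleSum_succ_eq_of_pascal_snd (fun i => ?_) (fun i j => ?_) d
    · simp only [term, χ, T_mul_C_mul_T, Nat.choose_zero_right,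
        show g + (d + 1) = g + 1 + d by omega]
      congr 2; push_cast; ring
    · simp only [term, χ, T_mul_C_mul_T]
      rw [neg_mul, T_mul_C_mul_T, ← neg_mul, ← map_neg]
      refine C_mul_T_eq_add ?_ (by push_cast; ring) (by push_cast; ring)
      rw [show g + (j + 1) - 1 = g + j by omega, show g + (j + 1) = g + j + 1 by omega,
        Nat.choose_succ_succ', show g + 1 + j - 1 = g + j by omega,
        show g + (d + 1) = g + 1 + d by omega]
      push_cast; ring
  rw [hfst, hsnd]
  ring

theorem firstSum_succ_add_two (g d : ℕ) :
    firstSum (g + 1) (d + 2) = T 1 * firstSum g (d + 2) + firstSum (g + 1) (d + 1) := by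
  cases g with
  | zero => simp [firstSum]
  | succ m =>
    simp only [firstSum, Nat.add_sub_cancel, mul_sum]
    refine sum_range_succ_eq_of_pascal (by simp) (fun ℓ => ?_) m
    rw [T_mul_C_mul_T]
    refine C_mul_T_eq_add ?_ (by push_cast; ring) rfl
    rw [show ℓ + 1 + (d + 2) - 1 = ℓ + d + 1 + 1 by omega, Nat.choose_succ_succ',
      show ℓ + (d + 2) - 1 = ℓ + d + 1 by omega, show ℓ + 1 + (d + 1) - 1 = ℓ + d + 1 by omega]
    push_cast; ring

theorem secondSum_succ_add_two (g d : ℕ) :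
    secondSum (g + 1) (d + 2) = secondSum (g + 1) (d + 1) + T 1 * secondSum g (d + 2) := by
  simp only [secondSum, Nat.add_sub_cancel, show d + 2 - 1 = d + 1 by omega, mul_sum, T_mul_C_mul_T]
  refine sum_range_succ_eq_of_pascal (by simp only [Nat.choose_zero_right]; push_cast; ring_nf)
    (fun ℓ => ?_) d
  refine C_mul_T_eq_add ?_ (by push_cast; ring) (by push_cast; ring)
  rw [show g + 1 + (ℓ + 1) - 1 = g + ℓ + 1 by omega, Nat.choose_succ_succ',
    show g + 1 + ℓ - 1 = g + ℓ by omega, show g + (ℓ + 1) - 1 = g + ℓ by omega]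
  push_cast; ring

-- Truncated subtraction makes `(0 + j - 1).choose j` vanish for `j ≥ 1`: only `j = 0` survives.
theorem doubleSum_zero_left (d : ℕ) :
    doubleSum 0 d = ∑ i ∈ range d, C ((-1 : ℤ) ^ (i + d) * d.choose i) * T ((i : ℤ) - d) := by
  rw [doubleSum, triangleSum]
  refine sum_congr rfl fun i hi => ?_
  obtain ⟨n, hn⟩ : ∃ n, d - i = n + 1 := ⟨d - i - 1, by rw [mem_range] at hi; omega⟩
  rw [hn, sum_range_succ']
  simp [term, Nat.choose_succ_self]

theorem secondSum_zero_left (d : ℕ) (hd : 2 ≤ d) : secondSum 0 d = C ((-1 : ℤ) ^ d) * T (-d) := by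
  obtain ⟨n, hn⟩ : ∃ n, d - 1 = n + 1 := ⟨d - 2, by omega⟩
  rw [secondSum, hn, sum_range_succ']
  simp [Nat.choose_succ_self]

theorem one_add_doubleSum_zero_left (d : ℕ) (hd : 2 ≤ d) :
    1 + doubleSum 0 d = (1 - T 1) ^ d * (firstSum 0 d + secondSum 0 d) := by
  have hfirst : firstSum 0 d = 0 := by simp [firstSum]
  have hsign : (1 - T 1) ^ d * C ((-1 : ℤ) ^ d) = (T 1 - 1) ^ d := by
    rw [map_pow, map_neg, map_one, ← mul_pow, mul_neg_one, neg_sub]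
  rw [doubleSum_zero_left, hfirst, secondSum_zero_left d hd, zero_add, ← mul_assoc, hsign, sub_pow,
    sum_mul, sum_range_succ, add_comm]
  congr 1
  · refine sum_congr rfl fun i _ => ?_
    simp only [map_mul, map_pow, map_neg, map_one, map_natCast, one_pow, mul_one, T_pow, T_sub]
    ring
  · rw [Nat.sub_self, Nat.choose_self, ← two_mul, pow_mul, neg_one_sq, T_pow]
    simp only [one_pow, pow_zero, Nat.cast_one, mul_one, one_mul]
    rw [← T_add, add_neg_cancel, T_zero]

theorem one_add_doubleSum_succ_one (g : ℕ) :
    1 + doubleSum (g + 1) 1 = (1 - T 1) ^ 1 * (firstSum (g + 1) 1 + secondSum (g + 1) 1) := by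
  have hdouble : doubleSum (g + 1) 1 = -T g := by simp [doubleSum, triangleSum, term]
  have hfirst : firstSum (g + 1) 1 = ∑ ℓ ∈ range g, T 1 ^ ℓ := by simp [firstSum, T_pow]
  rw [hdouble, hfirst, secondSum, Nat.sub_self, sum_range_zero, add_zero, pow_one,
    mul_neg_geom_sum, T_pow, mul_one, sub_eq_add_neg]

theorem one_add_doubleSum (g d : ℕ) (hd : 1 ≤ d) (hgd : 2 ≤ g + d) :
    1 + doubleSum g d = (1 - T 1) ^ d * (firstSum g d + secondSum g d) := by
  induction g generalizing d with
  | zero => exact one_add_doubleSum_zero_left d (by omega)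
  | succ g ihg =>
    induction d with
    | zero => omega
    | succ d ihd =>
      rcases d with _ | e
      · exact one_add_doubleSum_succ_one g
      · calc 1 + doubleSum (g + 1) (e + 2)
            = (1 - T 1) * (1 + doubleSum (g + 1) (e + 1)) + T 1 * (1 + doubleSum g (e + 2)) := by
              rw [doubleSum_succ_succ]; ring
          _ = _ := by
              rw [ihd (by omega) (by omega), ihg (e + 2) (by omega) (by omega),
                firstSum_succ_add_two, secondSum_succ_add_two]
              ring

end HilbertNumerator

/-- For `1 ≤ g < f` with `δ = f − g`, in the Laurent polynomial ring `ℤ[s, s⁻¹]`: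
`1 + ∑_{i,j ≥ 0, i+j ≤ δ−1} (−1)^{i+δ} · C(f,i) · C(g+j−1, j) · s^{i+2j+2g−f}
  = (1−s)^{f−g} · (∑_{ℓ=0}^{g−2} C(ℓ+f−g−1, ℓ) · s^ℓ
      + ∑_{ℓ=0}^{f−g−2} (−1)^{ℓ+δ} · C(g+ℓ−1, ℓ) · s^{ℓ+2g−f})`. -/
theorem hilbert_numerator_identity (g f : ℕ) (h1 : 1 ≤ g) (h2 : g < f)
    (δ : ℕ) (hδ : δ = f - g) :
    (1 : LaurentPolynomial ℤ)
      + ∑ i ∈ Finset.range δ, ∑ j ∈ Finset.range (δ - i),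
          C ((-1 : ℤ) ^ (i + δ) * (f.choose i) * ((g + j - 1).choose j))
            * T ((i : ℤ) + 2 * j + 2 * g - f)
      = (1 - T 1) ^ (f - g) *
          ((∑ ℓ ∈ Finset.range (g - 1), C (((ℓ + f - g - 1).choose ℓ : ℤ)) * T (ℓ : ℤ))
            + ∑ ℓ ∈ Finset.range (f - g - 1),
                C ((-1 : ℤ) ^ (ℓ + δ) * ((g + ℓ - 1).choose ℓ)) * T ((ℓ : ℤ) + 2 * g - f)) := by
  obtain ⟨d, rfl⟩ := Nat.exists_eq_add_of_le h2.le
  rw [Nat.add_sub_cancel_left] at hδ ⊢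
  subst hδ
  convert HilbertNumerator.one_add_doubleSum g δ (by omega) (by omega) using 4
  · rw [HilbertNumerator.doubleSum, triangleSum]
    refine sum_congr rfl fun i _ => sum_congr rfl fun j _ => ?_
    rw [HilbertNumerator.term]
    push_cast; ring_nf
  · refine sum_congr rfl fun ℓ _ => ?_
    rw [show ℓ + (g + δ) - g - 1 = ℓ + δ - 1 by omega]
  · refine sum_congr rfl fun ℓ _ => ?_
    push_cast; ring_nf
end

section
/- Let R be a commutative Noetherian ring and I a proper ideal of R. Suppose K₁ and K₂ are ideals of R containing I such that, for each i, the ideal Kᵢ is grade unmixed, grade Kᵢ = grade I, and grade I < grade (I : Kᵢ). Then K₁ = K₂. -/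
open Classical

/-- The grade of an ideal `I` in a commutative ring: the supremum of the lengths of
`R`-regular sequences contained in `I`, with the unit ideal assigned infinite grade. -/

noncomputable def Ideal.grade' {R : Type*} [CommRing R] (I : Ideal R) : ℕ∞ :=
  if I = ⊤ then ⊤
  else sSup {n : ℕ∞ | ∃ rs : List R, (∀ r ∈ rs, r ∈ I) ∧
    RingTheory.Sequence.IsRegular R rs ∧ (rs.length : ℕ∞) = n}

/-- An ideal `I` is grade unmixed if `grade 𝔭 = grade I` for every associated prime `𝔭`
of `R/I`. -/
def Ideal.IsGradeUnmixed {R : Type*} [CommRing R] (I : Ideal R) : Prop :=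
  ∀ p ∈ associatedPrimes R (R ⧸ I), Ideal.grade' p = Ideal.grade' I

/-!
If `x ∈ K₁ \ K₂`, then `(I : K₁) ⊆ (K₂ : x)`, and `(K₂ : x)` lies in an associated prime of
`R/K₂`, whose grade is `grade K₂ = grade I` by unmixedness. Monotonicity of grade then gives
`grade (I : K₁) ≤ grade I`, contradicting the hypothesis; so `K₁ ⊆ K₂`, and symmetrically.
-/

namespace Ideal

variable {R : Type*} [CommRing R]

lemma grade'_mono {I J : Ideal R} (h : I ≤ J) : I.grade' ≤ J.grade' := by
  unfold grade'
  by_cases hJ : J = ⊤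
  · simp [hJ]
  · have hI : I ≠ ⊤ := fun hI => hJ (top_le_iff.mp (hI ▸ h))
    rw [if_neg hI, if_neg hJ]
    exact sSup_le_sSup fun n ⟨rs, hrs, hreg, hlen⟩ => ⟨rs, fun r hr => h (hrs r hr), hreg, hlen⟩

variable [IsNoetherianRing R]

lemma exists_mem_associatedPrimes_colon_singleton_le (K : Ideal R) {x : R} (hx : x ∉ K) :
    ∃ p ∈ associatedPrimes R (R ⧸ K), K.colon {x} ≤ p := by
  have hx0 : Quotient.mk K x ≠ 0 := fun h => hx (Quotient.eq_zero_iff_mem.mp h)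
  obtain ⟨p, hp, hle⟩ := exists_le_isAssociatedPrime_of_isNoetherianRing R _ hx0
  refine ⟨p, hp, fun c hc => hle ?_⟩
  rw [Submodule.mem_colon_singleton] at hc ⊢
  exact Quotient.eq_zero_iff_mem.mpr hc

lemma IsGradeUnmixed.grade'_colon_singleton_le {K : Ideal R} (hK : K.IsGradeUnmixed) {x : R}
    (hx : x ∉ K) : (K.colon {x}).grade' ≤ K.grade' := by
  obtain ⟨p, hp, hle⟩ := K.exists_mem_associatedPrimes_colon_singleton_le hx
  exact hK p hp ▸ grade'_mono hle

lemma IsGradeUnmixed.le_of_grade'_lt_grade'_colon {I J K : Ideal R} (hK : K.IsGradeUnmixed)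
    (hIK : I ≤ K) (hKI : K.grade' = I.grade') (hJ : I.grade' < (Submodule.colon I J).grade') :
    J ≤ K := by
  intro x hxJ
  by_contra hxK
  have hcolon : Submodule.colon I J ≤ K.colon {x} :=
    Submodule.colon_mono hIK (Set.singleton_subset_iff.mpr hxJ)
  exact (calc I.grade' < (Submodule.colon I J).grade' := hJ
    _ ≤ (K.colon {x}).grade' := grade'_mono hcolon
    _ ≤ K.grade' := hK.grade'_colon_singleton_le hxK
    _ = I.grade' := hKI).false

end Ideal

theorem grade_unmixed_part_unique_general {R : Type*} [CommRing R] [IsNoetherianRing R]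
    (I K₁ K₂ : Ideal R)
    (h1le : I ≤ K₁) (h2le : I ≤ K₂)
    (h1u : K₁.IsGradeUnmixed) (h2u : K₂.IsGradeUnmixed)
    (h1g : K₁.grade' = I.grade') (h2g : K₂.grade' = I.grade')
    (h1c : I.grade' < (Submodule.colon I K₁).grade')
    (h2c : I.grade' < (Submodule.colon I K₂).grade') :
    K₁ = K₂ :=
  le_antisymm (h2u.le_of_grade'_lt_grade'_colon h2le h2g h1c)
    (h1u.le_of_grade'_lt_grade'_colon h1le h1g h2c)

/-- Uniqueness of the grade unmixed part: if `K₁` and `K₂` both contain `I`, are grade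
unmixed, have the same grade as `I`, and satisfy `grade I < grade (I : Kᵢ)`, then
`K₁ = K₂`. -/
theorem grade_unmixed_part_unique {R : Type*} [CommRing R] [IsNoetherianRing R]
    (I K₁ K₂ : Ideal R) (hI : I ≠ ⊤)
    (h1le : I ≤ K₁) (h2le : I ≤ K₂)
    (h1u : K₁.IsGradeUnmixed) (h2u : K₂.IsGradeUnmixed)
    (h1g : K₁.grade' = I.grade') (h2g : K₂.grade' = I.grade')
    (h1c : I.grade' < (Submodule.colon I K₁).grade')
    (h2c : I.grade' < (Submodule.colon I K₂).grade') :
    K₁ = K₂ :=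
  grade_unmixed_part_unique_general I K₁ K₂ h1le h2le h1u h2u h1g h2g h1c h2c
end
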